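/- arXiv:2107.03154 — 5 statements merged into one kernel-verified Lean document; each statement's English description precedes it below -/
import Mathlib

section
/- Let (H_i)_{i ≥ 0} be a sequence of finitely generated subgroups of a free group such that H_i ≤ H_{i+1} and rank(H_i) ≥ rank(H_{i+1}) for each i, and let H = ∪_i H_i. Then rank(H) = lim_{i → ∞} rank(H_i), and moreover there exists m such that H = H_i for all i ≥ m. -/
open scoped Monoid.Coprod

variable {F : Type*}

/-- The canonical homomorphism `φ_g : H ∗ ⟨x⟩ → F` from the free product of `H` with an
infinite cyclic group (the free group on one generator `x`), restricting to the inclusion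
`H ↪ F` and sending `x` to `g`. -/
noncomputable def phi [Group F] (H : Subgroup F) (g : F) :
    (↥H ∗ FreeGroup Unit) →* F :=
  Monoid.Coprod.lift H.subtype (FreeGroup.lift fun _ => g)

/-- `g` depends on `H` (is algebraic over `H`) if `φ_g` is not injective. -/
def Depends [Group F] (H : Subgroup F) (g : F) : Prop :=
  ¬ Function.Injective (phi H g)

/-- `dep H`: the set of elements of `F` that depend on `H`. -/
def depSet [Group F] (H : Subgroup F) : Set F := {g | Depends H g}

/-- `Dep H`: the subgroup generated by the elements that depend on `H`. -/
noncomputable def DepSubgroup [Group F] (H : Subgroup F) : Subgroup F :=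
  Subgroup.closure (depSet H)

/-- The rank of a subgroup: the minimal cardinality of a generating set. For subgroups of
free groups this equals the cardinality of a free basis. -/
noncomputable def rk [Group F] (H : Subgroup F) : Cardinal :=
  ⨅ S : {S : Set F // Subgroup.closure S = H}, Cardinal.mk S.1

/-! The union `K` is free by Nielsen–Schreier, and every `H i` has rank at most `n = rk (H 0)`.
If `K` had `n + 1` basis elements, they would all lie in one `H m`; mapping `K` to `(ZMod 2)^(n+1)`
by sending them to the standard basis and the other basis elements to `0`, the at most `n`
generators of `H m` would span an `(n+1)`-dimensional space. So `K` is finitely generated, and a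
finite generating set of `K` already lies in some `H m`. -/

theorem rk_le_of_closure_eq [Group F] {H : Subgroup F} {S : Set F}
    (hS : Subgroup.closure S = H) : rk H ≤ Cardinal.mk S :=
  ciInf_le (OrderBot.bddBelow _) (⟨S, hS⟩ : {S : Set F // Subgroup.closure S = H})

theorem exists_closure_eq_mk_eq_rk [Group F] (H : Subgroup F) :
    ∃ S : Set F, Subgroup.closure S = H ∧ Cardinal.mk S = rk H := by
  have : Nonempty {S : Set F // Subgroup.closure S = H} := ⟨⟨H, H.closure_eq⟩⟩
  obtain ⟨⟨S, hS⟩, h⟩ :=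
    ciInf_mem fun S : {S : Set F // Subgroup.closure S = H} => Cardinal.mk S.1
  exact ⟨S, hS, h⟩

theorem rk_lt_aleph0_of_fg [Group F] {H : Subgroup F} (hH : H.FG) : rk H < Cardinal.aleph0 := by
  obtain ⟨S, hS⟩ := hH
  exact (rk_le_of_closure_eq hS).trans_lt S.finite_toSet.lt_aleph0

theorem rk_subgroupOf_le [Group F] {L K : Subgroup F} (hLK : L ≤ K) :
    rk (L.subgroupOf K) ≤ rk L := by
  obtain ⟨S, hS, hcard⟩ := exists_closure_eq_mk_eq_rk L
  have hS_range : S ⊆ Set.range K.subtype := fun x hx =>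
    ⟨⟨x, hLK (hS ▸ Subgroup.subset_closure hx)⟩, rfl⟩
  have hclosure : Subgroup.closure (K.subtype ⁻¹' S) = L.subgroupOf K := by
    apply Subgroup.map_injective K.subtype_injective
    rw [MonoidHom.map_closure, Set.image_preimage_eq_of_subset hS_range, hS,
      Subgroup.subgroupOf_map_subtype, inf_of_le_left hLK]
  calc rk (L.subgroupOf K) ≤ Cardinal.mk (K.subtype ⁻¹' S) := rk_le_of_closure_eq hclosure
    _ ≤ Cardinal.mk S := Cardinal.mk_preimage_of_injective _ _ K.subtype_injective
    _ = rk L := hcard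

theorem IsFreeGroup.card_le_rk_of_forall_of_mem {G : Type*} [Group G] [IsFreeGroup G]
    (L : Subgroup G) (B : Finset (IsFreeGroup.Generators G))
    (hB : ∀ b ∈ B, IsFreeGroup.of b ∈ L) : (B.card : Cardinal) ≤ rk L := by
  classical
  obtain ⟨S, hS, hcard⟩ := exists_closure_eq_mk_eq_rk L
  let f : G →* Multiplicative (B → ZMod 2) := IsFreeGroup.lift fun b =>
    Multiplicative.ofAdd (if hb : b ∈ B then Pi.single ⟨b, hb⟩ 1 else 0)
  let A : Set (B → ZMod 2) := (fun g => (f g).toAdd) '' S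
  have hL : L ≤ (Submodule.span (ZMod 2) A).toAddSubgroup.toSubgroup.comap f := by
    rw [← hS, Subgroup.closure_le]
    exact fun g hg => Submodule.subset_span ⟨g, hg, rfl⟩
  have hspan : Submodule.span (ZMod 2) A = ⊤ := by
    rw [eq_top_iff, ← (Pi.basisFun (ZMod 2) B).span_eq, Submodule.span_le]
    rintro _ ⟨b, rfl⟩
    simpa [f, Pi.basisFun_apply] using hL (hB b b.2)
  calc (B.card : Cardinal) = Module.rank (ZMod 2) (B → ZMod 2) := by simp
    _ = Module.rank (ZMod 2) (Submodule.span (ZMod 2) A) := by rw [hspan, rank_top]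
    _ ≤ Cardinal.mk A := rank_span_le A
    _ ≤ Cardinal.mk S := Cardinal.mk_image_le
    _ = rk L := hcard

theorem IsFreeGroup.finite_generators_of_rk_le {G : Type*} [Group G] [IsFreeGroup G]
    {ι : Type*} [Nonempty ι] {L : ι → Subgroup G} (hL : Directed (· ≤ ·) L)
    (hcover : ∀ g, ∃ i, g ∈ L i) {n : ℕ} (hrk : ∀ i, rk (L i) ≤ n) :
    Finite (IsFreeGroup.Generators G) := by
  classical
  by_contra hinf
  rw [not_finite_iff_infinite] at hinf
  obtain ⟨B, hB⟩ := Infinite.exists_subset_card_eq (IsFreeGroup.Generators G) (n + 1)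
  choose idx hidx using fun b => hcover (IsFreeGroup.of b)
  obtain ⟨m, hm⟩ := hL.finset_le (B.image idx)
  have hcard := (IsFreeGroup.card_le_rk_of_forall_of_mem (L m) B fun b hb =>
    hm _ (Finset.mem_image_of_mem idx hb) (hidx b)).trans (hrk m)
  rw [hB, Nat.cast_le] at hcard
  omega

theorem IsFreeGroup.fg_of_finite_generators (G : Type*) [Group G] [IsFreeGroup G]
    [Finite (IsFreeGroup.Generators G)] : Group.FG G :=
  Group.fg_of_surjective (f := (IsFreeGroup.toFreeGroup G).symm.toMonoidHom)
    (IsFreeGroup.toFreeGroup G).symm.surjective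

theorem Subgroup.exists_eq_iSup_of_fg [Group F] {ι : Type*} [Nonempty ι] {H : ι → Subgroup F}
    (hH : Directed (· ≤ ·) H) (hfg : (⨆ i, H i).FG) : ∃ m, H m = ⨆ i, H i := by
  classical
  obtain ⟨T, hT⟩ := hfg
  choose idx hidx using fun t : T => (Subgroup.mem_iSup_of_directed hH).mp
    (hT ▸ Subgroup.subset_closure t.2)
  obtain ⟨m, hm⟩ := hH.finset_le (Finset.univ.image idx)
  refine ⟨m, le_antisymm (le_iSup H m) ?_⟩
  rw [← hT, Subgroup.closure_le]
  exact fun t ht => hm _ (Finset.mem_image_of_mem idx (Finset.mem_univ ⟨t, ht⟩)) (hidx ⟨t, ht⟩)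

/-- an ascending chain of finitely generated subgroups of a free group with
nonincreasing ranks stabilizes: there is `m` such that the union equals `H i` for all
`i ≥ m`, and the rank of the union equals the (eventually constant) limit of the ranks. -/
theorem chain_stabilizes [Group F] [IsFreeGroup F] (H : ℕ → Subgroup F)
    (hFG : ∀ i, (H i).FG) (hmono : ∀ i, H i ≤ H (i + 1))
    (hrk : ∀ i, rk (H (i + 1)) ≤ rk (H i)) :
    ∃ m : ℕ, ∀ i, m ≤ i → (⨆ j, H j) = H i ∧ rk (⨆ j, H j) = rk (H i) := by
  have hH : Monotone H := monotone_nat_of_le_succ hmono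
  set K := ⨆ j, H j
  obtain ⟨n, hn⟩ := Cardinal.lt_aleph0.mp (rk_lt_aleph0_of_fg (hFG 0))
  have hrk_le : ∀ i, rk (H i) ≤ rk (H 0) := fun i =>
    antitone_nat_of_succ_le (f := fun i => rk (H i)) hrk (Nat.zero_le i)
  have hrkK : ∀ i, rk ((H i).subgroupOf K) ≤ n := fun i =>
    hn ▸ (rk_subgroupOf_le (le_iSup H i)).trans (hrk_le i)
  have : Finite (IsFreeGroup.Generators K) :=
    IsFreeGroup.finite_generators_of_rk_le
      (Monotone.directed_le fun i j hij => Subgroup.subgroupOf_mono K (hH hij))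
      (fun g => (Subgroup.mem_iSup_of_directed hH.directed_le).mp g.2) hrkK
  obtain ⟨m, hm⟩ := Subgroup.exists_eq_iSup_of_fg hH.directed_le
    ((Group.fg_iff_subgroup_fg K).mp (IsFreeGroup.fg_of_finite_generators K))
  refine ⟨m, fun i hi => ?_⟩
  have hKi : K = H i := le_antisymm (hm.ge.trans (hH hi)) (le_iSup H i)
  exact ⟨hKi, by rw [hKi]⟩
end

section
/- Let H ≤ G ≤ K be subgroups of a free group F. If H is dependence-closed in G and G is dependence-closed in K, then H is dependence-closed in K. -/
/-!
Independence over `G` passes to every `H ≤ G`: the map `φ_g` for `H` factors as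
`H ∗ ⟨x⟩ ↪ G ∗ ⟨x⟩ → F`, and a free product of injective homomorphisms is injective.
So an element of `K \ G` does not depend on `H` because `G` is closed in `K`, and one of
`G \ H` does not because `H` is closed in `G`.
-/

open scoped Monoid.Coprod

variable {F : Type*}

/-- `H` is dependence-closed in `G`: no element of `G \ H` depends on `H`. -/
def DepClosedIn [Group F] (H G : Subgroup F) : Prop :=
  ∀ g : F, g ∈ G → g ∉ H → ¬ Depends H g

open Function

namespace Monoid.Coprod

universe u v w

theorem map_id_injective {A : Type u} {B : Type v} {C : Type w} [Group A] [Group B] [Group C]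
    {f : A →* B} (hf : Injective f) : Injective (map f (MonoidHom.id C)) := by
  -- `B ∗ C` is the pushout of `B ← A → A ∗ C` (lifted to a common universe), and a factor of
  -- an amalgam of groups along injective maps embeds into it.
  let G : Bool → Type (max u v w) := fun b => cond b (ULift.{max u w} B) (ULift.{v} (A ∗ C))
  let _ : ∀ b, Group (G b) := fun b => by cases b <;> exact ULift.group
  let φ : ∀ b, A →* G b
    | true => MulEquiv.ulift.symm.toMonoidHom.comp f
    | false => MulEquiv.ulift.symm.toMonoidHom.comp inl
  have hφ : ∀ b, Injective (φ b)
    | true => MulEquiv.ulift.symm.injective.comp hf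
    | false => MulEquiv.ulift.symm.injective.comp inl_injective
  let π : B ∗ C →* PushoutI φ :=
    lift ((PushoutI.of (φ := φ) true).comp MulEquiv.ulift.symm.toMonoidHom)
      ((PushoutI.of (φ := φ) false).comp (MulEquiv.ulift.symm.toMonoidHom.comp inr))
  have hπ : π.comp (map f (MonoidHom.id C)) =
      (PushoutI.of (φ := φ) false).comp MulEquiv.ulift.symm.toMonoidHom := by
    refine hom_ext ?_ rfl
    ext a
    exact (PushoutI.of_apply_eq_base φ true a).trans (PushoutI.of_apply_eq_base φ false a).symm
  refine Injective.of_comp (f := π) ?_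
  rw [← MonoidHom.coe_comp, hπ]
  exact (PushoutI.of_injective hφ false).comp MulEquiv.ulift.symm.injective

theorem map_injective {M N M' N' : Type*} [Group M] [Group N] [Group M'] [Group N']
    {f : M →* M'} {g : N →* N'} (hf : Injective f) (hg : Injective g) :
    Injective (map f g) := by
  have hg' : Injective (map (MonoidHom.id M') g) := by
    have : map (MonoidHom.id M') g = (swap N' M').comp ((map g (.id M')).comp (swap M' N)) :=
      hom_ext rfl rfl
    rw [this]
    exact swap_injective.comp ((map_id_injective hg).comp swap_injective)
  have : map f g = (map (.id M') g).comp (map f (.id N)) := hom_ext rfl rfl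
  rw [this]
  exact hg'.comp (map_id_injective hf)

end Monoid.Coprod

section

variable [Group F] {H G : Subgroup F}

theorem phi_comp_map_inclusion (hHG : H ≤ G) (g : F) :
    (phi G g).comp (Monoid.Coprod.map (Subgroup.inclusion hHG) (.id _)) = phi H g :=
  Monoid.Coprod.hom_ext rfl rfl

theorem Depends.mono {g : F} (hHG : H ≤ G) (hdep : Depends H g) : Depends G g := by
  intro hinj
  apply hdep
  rw [← phi_comp_map_inclusion hHG]
  exact hinj.comp (Monoid.Coprod.map_injective (Subgroup.inclusion_injective hHG) injective_id)

end

theorem depClosedIn_trans_general [Group F] (H G K : Subgroup F)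
    (hHG : H ≤ G)
    (h₁ : DepClosedIn H G) (h₂ : DepClosedIn G K) : DepClosedIn H K := by
  intro g hgK hgH hdep
  by_cases hgG : g ∈ G
  · exact h₁ g hgG hgH hdep
  · exact h₂ g hgK hgG (hdep.mono hHG)

/-- transitivity of being dependence-closed. -/
theorem depClosedIn_trans [Group F] [IsFreeGroup F] (H G K : Subgroup F)
    (hHG : H ≤ G) (hGK : G ≤ K)
    (h₁ : DepClosedIn H G) (h₂ : DepClosedIn G K) : DepClosedIn H K :=
  depClosedIn_trans_general H G K hHG h₁ h₂
end

section
/- Let H be a dependence-closed subgroup of a free group F. Then H is malnormal in F: for every g ∈ F \ H, the intersection g H g⁻¹ ∩ H is trivial. -/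
open scoped Monoid.Coprod

variable {F : Type*}

/-!
If `1 ≠ h ∈ H` and `g h g⁻¹ ∈ H`, then `x h x⁻¹ (g h g⁻¹)⁻¹` lies in the kernel of `φ_g`,
and it is nontrivial in `H ∗ ⟨x⟩`; so `g` depends on `H` and lies in `Dep H = H`.
Nontriviality of such conjugates in a free product `A ∗ B` is witnessed by a permutation
action on `A ⊕ B`.
-/

namespace Monoid.Coprod

variable {A B : Type*} [Group A] [Group B]

open Classical in
/-- `A` acts on the left summand of `A ⊕ B`, and `B` on the right summand after the points
`inl 1` and `inr 1` are exchanged, so that the two actions share a base point. -/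
noncomputable def wedgePerm : A ∗ B →* Equiv.Perm (A ⊕ B) :=
  lift ((Equiv.Perm.sumCongrHom A B).comp ((MulAction.toPermHom A A).prod 1))
    ((MulAut.conj (Equiv.swap (Sum.inl 1) (Sum.inr 1))).toMonoidHom.comp
      ((Equiv.Perm.sumCongrHom A B).comp
        ((1 : B →* Equiv.Perm A).prod (MulAction.toPermHom B B))))

theorem eq_one_of_inr_mul_inl_mul_inv_eq_inl {a a' : A} {b : B} (hb : b ≠ 1)
    (h : inr b * inl a * (inr b)⁻¹ = (inl a' : A ∗ B)) : a = 1 := by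
  by_contra ha
  -- the left side moves `inr b` to `inl a`, the right side fixes it
  have := congrArg (fun x => wedgePerm x (Sum.inr b)) h
  simp [wedgePerm, Equiv.swap_apply_of_ne_of_ne, ha, hb] at this

end Monoid.Coprod

open Monoid.Coprod in
theorem depends_of_conj_mem [Group F] {H : Subgroup F} {g h : F} (hH : h ∈ H) (h1 : h ≠ 1)
    (hconj : g * h * g⁻¹ ∈ H) : Depends H g := by
  intro hinj
  have hker : phi H g (inr (FreeGroup.of ()) * inl ⟨h, hH⟩ * (inr (FreeGroup.of ()))⁻¹) =
      phi H g (inl ⟨g * h * g⁻¹, hconj⟩) := by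
    simp [phi]
  have := eq_one_of_inr_mul_inl_mul_inv_eq_inl (FreeGroup.of_ne_one ()) (hinj hker)
  exact h1 (congrArg Subtype.val this)

theorem map_conj_inf_eq_bot_of_not_depends [Group F] {H : Subgroup F} {g : F}
    (hg : ¬ Depends H g) : H.map (MulAut.conj g).toMonoidHom ⊓ H = ⊥ := by
  refine eq_bot_iff.2 ?_
  rintro _ ⟨⟨h, hH, rfl⟩, hconj⟩
  by_contra hne
  exact hg (depends_of_conj_mem hH (by rintro rfl; simp at hne) hconj)

theorem depClosed_malnormal_general [Group F] (H : Subgroup F)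
    (hH : DepSubgroup H = H) :
    ∀ g : F, g ∉ H → Subgroup.map (MulAut.conj g).toMonoidHom H ⊓ H = ⊥ :=
  fun _ hg => map_conj_inf_eq_bot_of_not_depends fun hdep =>
    hg (hH ▸ Subgroup.subset_closure hdep)

/-- a dependence-closed subgroup is malnormal: for every `g ∉ H`,
`gHg⁻¹ ∩ H = 1`. -/
theorem depClosed_malnormal [Group F] [IsFreeGroup F] (H : Subgroup F)
    (hH : DepSubgroup H = H) :
    ∀ g : F, g ∉ H → Subgroup.map (MulAut.conj g).toMonoidHom H ⊓ H = ⊥ :=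
  depClosed_malnormal_general H hH
end

section
/- Let H be a dependence-closed subgroup of a free group F. Then H is pure (root-closed): if g ∈ F and gⁿ ∈ H for some integer n ≠ 0, then g ∈ H. -/
open scoped Monoid.Coprod

variable {F : Type*}

lemma Depends.of_zpow_mem [Group F] {H : Subgroup F} {g : F} {n : ℤ} (hn : n ≠ 0)
    (hgn : g ^ n ∈ H) : Depends H g := by
  intro hinj
  -- `inl (gⁿ)` and `inr (xⁿ)` have the same image `gⁿ`, but differ on the second projection.
  have hphi : phi H g (Monoid.Coprod.inl ⟨g ^ n, hgn⟩) =
      phi H g (Monoid.Coprod.inr (FreeGroup.of () ^ n)) := by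
    simp [phi]
  have hx : FreeGroup.of () ^ n = 1 := by
    simpa using congrArg Monoid.Coprod.snd (hinj hphi).symm
  exact FreeGroup.of_ne_one () ((IsMulTorsionFree.zpow_eq_one_iff_left hn).mp hx)

lemma mem_of_depends [Group F] {H : Subgroup F} (hH : DepSubgroup H = H) {g : F}
    (hg : Depends H g) : g ∈ H :=
  hH ▸ Subgroup.subset_closure hg

theorem depClosed_pure_general [Group F] (H : Subgroup F)
    (hH : DepSubgroup H = H) :
    ∀ g : F, ∀ n : ℤ, n ≠ 0 → g ^ n ∈ H → g ∈ H :=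
  fun _ _ hn hgn => mem_of_depends hH (.of_zpow_mem hn hgn)

/-- a dependence-closed subgroup is pure (root-closed): if `gⁿ ∈ H` for some
integer `n ≠ 0`, then `g ∈ H`. -/
theorem depClosed_pure [Group F] [IsFreeGroup F] (H : Subgroup F)
    (hH : DepSubgroup H = H) :
    ∀ g : F, ∀ n : ℤ, n ≠ 0 → g ^ n ∈ H → g ∈ H :=
  depClosed_pure_general H hH
end

section
/- Let H be a dependence-closed subgroup of a free group F and let G ≤ F be a subgroup with H ≤ G and H ≠ G. Then the index of H in G is infinite. -/
open scoped Monoid.Coprod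

variable {F : Type*}

/- A dependence-closed subgroup is closed under extracting roots, so a finite-index overgroup,
each of whose elements has a power in the subgroup, collapses onto it. (Mathlib encodes infinite
index as `relIndex = 0`.) -/

section

variable [Group F] {H : Subgroup F}

/-- The word `x ^ k * (g ^ k)⁻¹` lies in the kernel of `φ_g`, yet is nontrivial since it projects
to `x ^ k ≠ 1` in the torsion-free group `⟨x⟩`. -/
theorem depends_of_pow_mem {g : F} {k : ℕ} (hk : k ≠ 0) (hgk : g ^ k ∈ H) : Depends H g := by
  intro hinj
  set w : ↥H ∗ FreeGroup Unit :=
    Monoid.Coprod.inr (FreeGroup.of () ^ k) * Monoid.Coprod.inl ⟨g ^ k, hgk⟩⁻¹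
  have hw : w = 1 := hinj (by simp [phi, w])
  have hxk : FreeGroup.of () ^ k = 1 := by simpa [w] using congrArg Monoid.Coprod.snd hw
  exact FreeGroup.of_ne_one () (pow_eq_one_iff.mp hxk |>.resolve_right hk)

theorem mem_of_pow_mem_of_depSubgroup_eq (hH : DepSubgroup H = H) {g : F} {k : ℕ} (hk : k ≠ 0)
    (hgk : g ^ k ∈ H) : g ∈ H :=
  hH ▸ Subgroup.subset_closure (depends_of_pow_mem hk hgk)

end

theorem depClosed_infinite_index_general [Group F] (H G : Subgroup F)
    (hH : DepSubgroup H = H) (hHG : H ≤ G) (hne : H ≠ G) :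
    H.relIndex G = 0 := by
  by_contra hidx
  refine hne (le_antisymm hHG fun g hg => ?_)
  obtain ⟨k, hk, -, hgk, -⟩ := Subgroup.exists_pow_mem_of_relIndex_ne_zero hidx hg
  exact mem_of_pow_mem_of_depSubgroup_eq hH hk.ne' hgk

/-- a proper extension of a dependence-closed subgroup has infinite index
(in Mathlib, `relindex = 0` encodes infinite index). -/
theorem depClosed_infinite_index [Group F] [IsFreeGroup F] (H G : Subgroup F)
    (hH : DepSubgroup H = H) (hHG : H ≤ G) (hne : H ≠ G) :
    H.relIndex G = 0 :=
  depClosed_infinite_index_general H G hH hHG hne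
end
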